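/- arXiv:2104.13860 — 2 statements merged into one kernel-verified Lean document; each statement's English description precedes it below -/
import Mathlib

section
/- Let G be a connected graph of diameter d ∈ {2,3}, and let (V₁, V₂, V₃) be a partition of V(G) such that there is no edge between V₁ and V₃. Then any two vertices u, v ∈ V₃ are at distance at most d in the induced subgraph G[V₂ ∪ V₃]. -/
/-- If G is connected of diameter d ∈ {2,3} and (V₁,V₂,V₃) partitions V(G) with
no edge between V₁ and V₃, then any two vertices of V₃ are at distance at most
d in the induced subgraph G[V₂ ∪ V₃]. -/
theorem dist_le_in_induced_of_partition
    {V : Type*} (G : SimpleGraph V) (d : ℕ) (hd : d = 2 ∨ d = 3)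
    (V₁ V₂ V₃ : Set V)
    (hcover : V₁ ∪ V₂ ∪ V₃ = Set.univ)
    (h12 : Disjoint V₁ V₂) (h13 : Disjoint V₁ V₃) (h23 : Disjoint V₂ V₃)
    (hnoedge : ∀ u ∈ V₁, ∀ v ∈ V₃, ¬ G.Adj u v)
    (hconn : G.Connected) (hdiam : ∀ u v : V, G.dist u v ≤ d) :
    ∀ u v : ↥(V₂ ∪ V₃), (u : V) ∈ V₃ → (v : V) ∈ V₃ →
      (G.induce (V₂ ∪ V₃)).edist u v ≤ d := by
  intro u v hu hv
  have hmem : ∀ a : V, ∀ w ∈ V₃, G.Adj a w → a ∈ V₂ ∪ V₃ := by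
    intro a w hw hadj
    have : a ∈ V₁ ∪ V₂ ∪ V₃ := hcover ▸ Set.mem_univ a
    rcases this with (h1 | h2) | h3
    · exact absurd hadj (hnoedge a h1 w hw)
    · exact Or.inl h2
    · exact Or.inr h3
  obtain ⟨x, hxm⟩ := u
  obtain ⟨y, hym⟩ := v
  simp only [Subtype.coe_mk] at hu hv
  obtain ⟨p, hp⟩ := hconn.exists_walk_length_eq_dist x y
  have hlen : p.length ≤ d := hp ▸ hdiam x y
  have hd3 : p.length ≤ 3 := le_trans hlen (by omega)
  suffices h : ∃ q : (G.induce (V₂ ∪ V₃)).Walk ⟨x, hxm⟩ ⟨y, hym⟩,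
      q.length ≤ d by
    obtain ⟨q, hq⟩ := h
    calc (G.induce (V₂ ∪ V₃)).edist ⟨x, hxm⟩ ⟨y, hym⟩ ≤ q.length := q.edist_le
    _ ≤ d := by exact_mod_cast hq
  cases p with
  | nil => exact ⟨SimpleGraph.Walk.nil, by simp⟩
  | cons h1 q =>
    rename_i a
    cases q with
    | nil =>
      exact ⟨SimpleGraph.Walk.cons
        (show (G.induce (V₂ ∪ V₃)).Adj ⟨x, hxm⟩ ⟨y, hym⟩ from h1)
        SimpleGraph.Walk.nil, by simpa using by omega⟩
    | cons h2 q2 =>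
      rename_i b
      cases q2 with
      | nil =>
        have ha : a ∈ V₂ ∪ V₃ := hmem a x hu h1.symm
        exact ⟨SimpleGraph.Walk.cons
          (show (G.induce (V₂ ∪ V₃)).Adj ⟨x, hxm⟩ ⟨a, ha⟩ from h1)
          (SimpleGraph.Walk.cons
            (show (G.induce (V₂ ∪ V₃)).Adj ⟨a, ha⟩ ⟨y, hym⟩ from h2)
            SimpleGraph.Walk.nil), by simpa using by omega⟩
      | cons h3 q3 =>
        rename_i c
        cases q3 with
        | nil =>
          have ha : a ∈ V₂ ∪ V₃ := hmem a x hu h1.symm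
          have hb : b ∈ V₂ ∪ V₃ := hmem b y hv h3
          have hd' : d = 3 := by
            rcases hd with h | h
            · exfalso; simp [SimpleGraph.Walk.length_cons] at hlen; omega
            · exact h
          exact ⟨SimpleGraph.Walk.cons
            (show (G.induce (V₂ ∪ V₃)).Adj ⟨x, hxm⟩ ⟨a, ha⟩ from h1)
            (SimpleGraph.Walk.cons
              (show (G.induce (V₂ ∪ V₃)).Adj ⟨a, ha⟩ ⟨b, hb⟩ from h2)
              (SimpleGraph.Walk.cons
                (show (G.induce (V₂ ∪ V₃)).Adj ⟨b, hb⟩ ⟨y, hym⟩ from h3)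
                SimpleGraph.Walk.nil)), by simp [hd']⟩
        | cons h4 q4 =>
          exfalso
          simp [SimpleGraph.Walk.length_cons] at hd3
          omega
end

section
/- Let G be a connected graph of diameter d ∈ {2,3}, and let (V₁, V₂, V₃) be a partition of V(G) with no edge between V₁ and V₃. Then for every v ∈ V₃, the set of vertices at distance at most d-1 from v in the induced subgraph G[V₂ ∪ V₃] dominates V₃: every vertex of V₃ is at distance at most d-1 from v in G[V₂ ∪ V₃] or has a neighbor (in G) at distance at most d-1 from v in G[V₂ ∪ V₃]. -/
/-- If G is connected of diameter d ∈ {2,3} and (V₁,V₂,V₃) partitions V(G) with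
no edge between V₁ and V₃, then for every v ∈ V₃ the ball of radius d-1 around
v in the induced subgraph G[V₂ ∪ V₃] dominates V₃. -/
theorem ball_dominates_V3_of_partition
    {V : Type*} (G : SimpleGraph V) (d : ℕ) (hd : d = 2 ∨ d = 3)
    (V₁ V₂ V₃ : Set V)
    (hcover : V₁ ∪ V₂ ∪ V₃ = Set.univ)
    (h12 : Disjoint V₁ V₂) (h13 : Disjoint V₁ V₃) (h23 : Disjoint V₂ V₃)
    (hnoedge : ∀ u ∈ V₁, ∀ v ∈ V₃, ¬ G.Adj u v)
    (hconn : G.Connected) (hdiam : ∀ u v : V, G.dist u v ≤ d) :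
    ∀ v : ↥(V₂ ∪ V₃), (v : V) ∈ V₃ →
      ∀ y ∈ V₃,
        (∃ w : ↥(V₂ ∪ V₃), (G.induce (V₂ ∪ V₃)).edist v w ≤ d - 1 ∧ (w : V) = y) ∨
        (∃ w : ↥(V₂ ∪ V₃), (G.induce (V₂ ∪ V₃)).edist v w ≤ d - 1 ∧ G.Adj (w : V) y) := by
  intro v hv y hy
  have mem_of_adj : ∀ x z : V, z ∈ V₃ → G.Adj x z → x ∈ V₂ ∪ V₃ := by
    intro x z hz hxz
    have hx : x ∈ V₁ ∪ V₂ ∪ V₃ := hcover ▸ Set.mem_univ x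
    rcases hx with (hx | hx) | hx
    · exact absurd hxz (hnoedge x hx z hz)
    · exact Or.inl hx
    · exact Or.inr hx
  obtain ⟨p, hp⟩ := hconn.exists_walk_length_eq_dist (v : V) y
  have hlen : p.length ≤ d := hp ▸ hdiam _ y
  -- helper to produce edist bounds from induced walks
  match p, hp, hlen with
  | SimpleGraph.Walk.nil, hp, hlen =>
    left
    refine ⟨v, ?_, rfl⟩
    simp [SimpleGraph.edist_self]
  | SimpleGraph.Walk.cons h SimpleGraph.Walk.nil, hp, hlen =>
    right
    refine ⟨v, ?_, h⟩
    simp [SimpleGraph.edist_self]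
  | SimpleGraph.Walk.cons (v := x₁) h₁ (SimpleGraph.Walk.cons h₂ SimpleGraph.Walk.nil), hp, hlen =>
    have hx₁ : x₁ ∈ V₂ ∪ V₃ := mem_of_adj x₁ (v : V) hv h₁.symm
    have hadj1 : (G.induce (V₂ ∪ V₃)).Adj v ⟨x₁, hx₁⟩ := h₁
    rcases hd with rfl | rfl
    · right
      refine ⟨⟨x₁, hx₁⟩, ?_, h₂⟩
      have := hadj1.toWalk.edist_le
      rw [show hadj1.toWalk.length = 1 from rfl] at this
      exact this.trans (by decide)
    · left
      refine ⟨⟨y, Or.inr hy⟩, ?_, rfl⟩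
      have hadj2 : (G.induce (V₂ ∪ V₃)).Adj ⟨x₁, hx₁⟩ ⟨y, Or.inr hy⟩ := h₂
      have := (hadj1.toWalk.append hadj2.toWalk).edist_le
      rw [show (hadj1.toWalk.append hadj2.toWalk).length = 2 from rfl] at this
      exact this.trans (by decide)
  | SimpleGraph.Walk.cons (v := x₁) h₁ (SimpleGraph.Walk.cons (v := x₂) h₂
      (SimpleGraph.Walk.cons h₃ SimpleGraph.Walk.nil)), hp, hlen =>
    have hd3 : d = 3 := by
      rcases hd with rfl | rfl
      · simp at hlen
      · rfl
    subst hd3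
    have hx₁ : x₁ ∈ V₂ ∪ V₃ := mem_of_adj x₁ (v : V) hv h₁.symm
    have hx₂ : x₂ ∈ V₂ ∪ V₃ := mem_of_adj x₂ y hy h₃
    right
    refine ⟨⟨x₂, hx₂⟩, ?_, h₃⟩
    have hadj1 : (G.induce (V₂ ∪ V₃)).Adj v ⟨x₁, hx₁⟩ := h₁
    have hadj2 : (G.induce (V₂ ∪ V₃)).Adj ⟨x₁, hx₁⟩ ⟨x₂, hx₂⟩ := h₂
    have := (hadj1.toWalk.append hadj2.toWalk).edist_le
    rw [show (hadj1.toWalk.append hadj2.toWalk).length = 2 from rfl] at this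
    exact this.trans (by decide)
  | SimpleGraph.Walk.cons h₁ (SimpleGraph.Walk.cons h₂ (SimpleGraph.Walk.cons h₃
      (SimpleGraph.Walk.cons h₄ q))), hp, hlen =>
    exfalso
    rcases hd with rfl | rfl <;> simp [SimpleGraph.Walk.length_cons] at hlen <;> omega
end
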